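/- Let G be a positive random variable with E[G]=1, independent of a standard normal g, and η ∈ ℝ. Define the implied vol I(y; η) as the unique positive solution of c_b(y, I) = E[c_b(y + η(G-1), √G)]. Then I satisfies the symmetry I(y; η) = I(-y; -η) for all y ∈ ℝ. -/
import Mathlib


open MeasureTheory ProbabilityTheory Real

noncomputable def normalPdf (x : ℝ) : ℝ := (Real.sqrt (2 * Real.pi))⁻¹ * Real.exp (-(x ^ 2) / 2)

noncomputable def normalCdf (x : ℝ) : ℝ := ∫ t in Set.Iic x, normalPdf t

noncomputable def cb (y σ : ℝ) : ℝ := -y * normalCdf (-y / σ) + σ * normalPdf (-y / σ)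

lemma normalPdf_even (x : ℝ) : normalPdf (-x) = normalPdf x := by
  simp [normalPdf, neg_pow]

lemma integrable_normalPdf : Integrable normalPdf := by
  have : Integrable (fun x : ℝ => Real.exp (-(1/2) * x ^ 2)) :=
    integrable_exp_neg_mul_sq (by norm_num)
  have h := this.const_mul (Real.sqrt (2 * Real.pi))⁻¹
  apply h.congr
  filter_upwards with x
  rw [show -(1/2) * x ^ 2 = -(x ^ 2) / 2 by ring]
  rfl

lemma integral_normalPdf : ∫ x, normalPdf x = 1 := by
  have h : ∫ x : ℝ, Real.exp (-(1/2) * x ^ 2) = Real.sqrt (Real.pi / (1/2)) :=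
    integral_gaussian (1/2)
  have hx : ∀ x : ℝ, normalPdf x = (Real.sqrt (2 * Real.pi))⁻¹ * Real.exp (-(1/2) * x ^ 2) := by
    intro x; rw [normalPdf, show -(x ^ 2) / 2 = -(1/2) * x ^ 2 by ring]
  rw [funext hx, integral_const_mul, h]
  rw [show Real.pi / (1/2) = 2 * Real.pi by ring]
  rw [inv_mul_cancel₀]
  positivity

lemma normalCdf_neg (x : ℝ) : normalCdf (-x) = 1 - normalCdf x := by
  have h1 : normalCdf (-x) = ∫ t in Set.Ioi x, normalPdf t := by
    calc normalCdf (-x) = ∫ t in Set.Iic (-x), normalPdf (-t) := by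
          simp [normalCdf, normalPdf_even]
      _ = ∫ t in Set.Ioi (-(-x)), normalPdf t := integral_comp_neg_Iic (-x) normalPdf
      _ = ∫ t in Set.Ioi x, normalPdf t := by rw [neg_neg]
  have h2 : normalCdf x + ∫ t in Set.Ioi x, normalPdf t = 1 := by
    rw [normalCdf, ← integral_normalPdf]
    rw [← setIntegral_union (Set.Iic_disjoint_Ioi le_rfl) measurableSet_Ioi
      integrable_normalPdf.integrableOn integrable_normalPdf.integrableOn]
    rw [Set.Iic_union_Ioi, setIntegral_univ]
  linarith [h1, h2]

lemma cb_neg (z σ : ℝ) : cb (-z) σ = z + cb z σ := by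
  simp only [cb, neg_neg, neg_div]
  rw [normalCdf_neg, normalPdf_even]
  ring

theorem implied_vol_symmetry {Ω : Type*} [MeasurableSpace Ω] (μ : Measure Ω)
    [IsProbabilityMeasure μ] (G : Ω → ℝ)
    (hpos : ∀ᵐ ω ∂μ, 0 < G ω) (hG : Integrable G μ)
    (hmean : ∫ ω, G ω ∂μ = 1)
    (hint : ∀ η y : ℝ,
      Integrable (fun ω => cb (y + η * (G ω - 1)) (Real.sqrt (G ω))) μ)
    (I : ℝ → ℝ → ℝ)
    (hIpos : ∀ η y, 0 < I η y)
    (hIeq : ∀ η y,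
      cb y (I η y) = ∫ ω, cb (y + η * (G ω - 1)) (Real.sqrt (G ω)) ∂μ)
    (hIuniq : ∀ η y σ, 0 < σ →
      cb y σ = (∫ ω, cb (y + η * (G ω - 1)) (Real.sqrt (G ω)) ∂μ) → σ = I η y) :
    ∀ η y : ℝ, I η y = I (-η) (-y) := by
  intro η y
  apply hIuniq (-η) (-y) (I η y) (hIpos η y)
  have hpt : ∀ ω, cb (-y + -η * (G ω - 1)) (Real.sqrt (G ω))
      = (y + η * (G ω - 1)) + cb (y + η * (G ω - 1)) (Real.sqrt (G ω)) := by
    intro ω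
    rw [show -y + -η * (G ω - 1) = -(y + η * (G ω - 1)) by ring, cb_neg]
  have hintlin : Integrable (fun ω => y + η * (G ω - 1)) μ := by
    apply Integrable.add (integrable_const y)
    exact ((hG.sub (integrable_const 1)).const_mul η)
  calc cb (-y) (I η y) = y + cb y (I η y) := cb_neg y (I η y)
    _ = y + ∫ ω, cb (y + η * (G ω - 1)) (Real.sqrt (G ω)) ∂μ := by rw [hIeq]
    _ = (∫ ω, y + η * (G ω - 1) ∂μ)
        + ∫ ω, cb (y + η * (G ω - 1)) (Real.sqrt (G ω)) ∂μ := by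
        have hEy : (∫ ω, y + η * (G ω - 1) ∂μ) = y := by
          have hfun : (fun ω => y + η * (G ω - 1)) = fun ω => (y - η) + η * G ω := by
            funext ω; ring
          rw [hfun, integral_add (integrable_const _) (hG.const_mul η),
            integral_const_mul, hmean, integral_const]
          simp
        rw [hEy]
    _ = ∫ ω, cb (-y + -η * (G ω - 1)) (Real.sqrt (G ω)) ∂μ := by
        rw [← integral_add hintlin (hint η y)]
        exact integral_congr_ae (Filter.Eventually.of_forall fun ω => (hpt ω).symm)
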